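/- arXiv:2512.23694 — 3 statements merged into one kernel-verified Lean document; each statement's English description precedes it below -/
import Mathlib

section
/- Let (Ω, 𝔽, μ) be a probability space, 𝒮 a measurable space, 𝒜 a nonempty finite set, and let S : Ω → 𝒮, A : Ω → 𝒜, R : Ω → ℝ, S' : Ω → 𝒮 be measurable with R bounded. Let γ ∈ [0,1) and let v : 𝒮 → ℝ be bounded measurable. Let b₀, π : 𝒮 × 𝒜 → ℝ be measurable with, for each s, b₀(s, ·) and π(s, ·) nonnegative and summing to 1 over 𝒜, and b₀(s, a) > 0 for all (s, a); set w := π / b₀. Assume: (i) the conditional law of A given S is b₀, i.e., for every bounded measurable g : 𝒮 × 𝒜 → ℝ, the conditional expectation of g(S, A) given the σ-algebra generated by S equals Σ_{a ∈ 𝒜} b₀(S, a)·g(S, a) almost surely; and (ii) there is a bounded measurable q : 𝒮 × 𝒜 → ℝ such that the conditional expectation of R + γ·v(S') given the σ-algebra generated by (S, A) equals q(S, A) almost surely. Let ŵ, q̂ : 𝒮 × 𝒜 → ℝ be bounded measurable, and define the doubly robust pseudo-outcome χ := Σ_{a ∈ 𝒜} π(S, a)·q̂(S, a) + ŵ(S,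 A)·(R + γ·v(S') − q̂(S, A)). Then, almost surely, the conditional expectation of χ given the σ-algebra generated by S, minus Σ_{a ∈ 𝒜} π(S, a)·q(S, a), equals Σ_{a ∈ 𝒜} b₀(S, a)·(w(S, a) − ŵ(S, a))·(q̂(S, a) − q(S, a)). -/
open MeasureTheory ProbabilityTheory

/-! Condition first on `(S, A)`: everything in `χ` except the Bellman target is
`σ(S, A)`-measurable and comes out, and the target averages to `q(S, A)`, so
`E[χ | S, A] = ∑ₐ π q̂ + ŵ (q − q̂)`. Averaging over `A ~ b₀(S, ·)` and writing `π = b₀ w`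
leaves the product of the two nuisance errors. -/

lemma abs_sum_mul_le_of_sum_eq_one {ι : Type*} {s : Finset ι} {w x : ι → ℝ}
    (hw : ∀ i ∈ s, 0 ≤ w i) (hw1 : ∑ i ∈ s, w i = 1) {C : ℝ} (hx : ∀ i ∈ s, |x i| ≤ C) :
    |∑ i ∈ s, w i * x i| ≤ C :=
  calc |∑ i ∈ s, w i * x i| ≤ ∑ i ∈ s, w i * |x i| := by
        refine (Finset.abs_sum_le_sum_abs _ _).trans_eq (Finset.sum_congr rfl fun i hi => ?_)
        rw [abs_mul, abs_of_nonneg (hw i hi)]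
    _ ≤ ∑ i ∈ s, w i * C :=
        Finset.sum_le_sum fun i hi => mul_le_mul_of_nonneg_left (hx i hi) (hw i hi)
    _ = C := by rw [← Finset.sum_mul, hw1, one_mul]

lemma integrable_of_abs_le {Ω : Type*} [MeasurableSpace Ω] {μ : Measure Ω} [IsFiniteMeasure μ]
    {f : Ω → ℝ} (hf : Measurable f) {C : ℝ} (hC : ∀ ω, |f ω| ≤ C) : Integrable f μ :=
  .of_bound hf.aestronglyMeasurable C (ae_of_all _ hC)

theorem condExp_comap_add_mul_eq {Ω E : Type*} {m₀ : MeasurableSpace Ω} [MeasurableSpace E]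
    {μ : Measure Ω} [IsFiniteMeasure μ] {X : Ω → E} (hX : Measurable X) {f g h : E → ℝ}
    (hf : Measurable f) (hfi : Integrable (fun ω => f (X ω)) μ) (hg : Measurable g) {C : ℝ}
    (hgC : ∀ x, |g x| ≤ C) {Y : Ω → ℝ} (hY : Integrable Y μ)
    (hYX : μ[Y | MeasurableSpace.comap X inferInstance] =ᵐ[μ] fun ω => h (X ω)) :
    μ[fun ω => f (X ω) + g (X ω) * Y ω | MeasurableSpace.comap X inferInstance]
      =ᵐ[μ] fun ω => f (X ω) + g (X ω) * h (X ω) := by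
  set m := MeasurableSpace.comap X inferInstance
  have hle : m ≤ m₀ := hX.comap_le
  have hfX : StronglyMeasurable[m] (f ∘ X) := (hf.comp (comap_measurable X)).stronglyMeasurable
  have hgX : StronglyMeasurable[m] (g ∘ X) := (hg.comp (comap_measurable X)).stronglyMeasurable
  have hgX_bound : ∀ᵐ ω ∂μ, ‖(g ∘ X) ω‖ ≤ C := ae_of_all _ fun ω => hgC (X ω)
  have hadd : μ[f ∘ X + (g ∘ X) * Y | m] =ᵐ[μ] μ[f ∘ X | m] + μ[(g ∘ X) * Y | m] :=
    condExp_add hfi (hY.bdd_mul (hgX.mono hle).aestronglyMeasurable hgX_bound) m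
  filter_upwards [hadd, condExp_stronglyMeasurable_mul_of_bound hle hgX hY C hgX_bound, hYX]
    with ω hadd hmul hYω
  change μ[f ∘ X + (g ∘ X) * Y | m] ω = _
  rw [hadd, Pi.add_apply, condExp_of_stronglyMeasurable hle hfX hfi, hmul, Pi.mul_apply, hYω]
  rfl

section BellmanTarget

variable {𝒮 𝒜 : Type*} [Fintype 𝒜] {π what q qhat : 𝒮 → 𝒜 → ℝ}

lemma measurable_sum_mul [MeasurableSpace 𝒮] [MeasurableSpace 𝒜] {f : 𝒮 → 𝒜 → ℝ}
    (hπ : Measurable fun p : 𝒮 × 𝒜 => π p.1 p.2) (hf : Measurable fun p : 𝒮 × 𝒜 => f p.1 p.2) :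
    Measurable fun s => ∑ a, π s a * f s a :=
  Finset.measurable_sum _ fun _ _ => (hπ.of_uncurry_right).mul hf.of_uncurry_right

variable (π what q qhat) in
/-- The conditional mean of the doubly robust pseudo-outcome given `(S, A) = (s, a)`. -/
def pseudoOutcomeMean (s : 𝒮) (a : 𝒜) : ℝ :=
  ∑ a', π s a' * qhat s a' + what s a * (q s a - qhat s a)

lemma measurable_pseudoOutcomeMean [MeasurableSpace 𝒮] [MeasurableSpace 𝒜]
    (hπ : Measurable fun p : 𝒮 × 𝒜 => π p.1 p.2)
    (hwhat : Measurable fun p : 𝒮 × 𝒜 => what p.1 p.2)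
    (hq : Measurable fun p : 𝒮 × 𝒜 => q p.1 p.2)
    (hqhat : Measurable fun p : 𝒮 × 𝒜 => qhat p.1 p.2) :
    Measurable fun p : 𝒮 × 𝒜 => pseudoOutcomeMean π what q qhat p.1 p.2 :=
  ((measurable_sum_mul hπ hqhat).comp measurable_fst).add (hwhat.mul (hq.sub hqhat))

lemma abs_pseudoOutcomeMean_le (hπnn : ∀ s a, 0 ≤ π s a) (hπsum : ∀ s, ∑ a, π s a = 1)
    {Cw Cq Cqh : ℝ} (hCw : ∀ s a, |what s a| ≤ Cw) (hCq : ∀ s a, |q s a| ≤ Cq)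
    (hCqh : ∀ s a, |qhat s a| ≤ Cqh) (s : 𝒮) (a : 𝒜) :
    |pseudoOutcomeMean π what q qhat s a| ≤ Cqh + Cw * (Cq + Cqh) := by
  refine (abs_add_le _ _).trans (add_le_add ?_ ?_)
  · exact abs_sum_mul_le_of_sum_eq_one (fun a _ => hπnn s a) (hπsum s) fun a _ => hCqh s a
  · rw [abs_mul]
    exact mul_le_mul (hCw s a) ((abs_sub _ _).trans (add_le_add (hCq s a) (hCqh s a)))
      (abs_nonneg _) ((abs_nonneg _).trans (hCw s a))

lemma sum_mul_pseudoOutcomeMean_sub {b : 𝒮 → 𝒜 → ℝ} {s : 𝒮} (hb : ∀ a, b s a ≠ 0)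
    (hbsum : ∑ a, b s a = 1) :
    ∑ a, b s a * pseudoOutcomeMean π what q qhat s a - ∑ a, π s a * q s a
      = ∑ a, b s a * (π s a / b s a - what s a) * (qhat s a - q s a) := by
  have hterm : ∀ a, b s a * (π s a / b s a - what s a) * (qhat s a - q s a)
      = π s a * qhat s a + b s a * (what s a * (q s a - qhat s a)) - π s a * q s a := by
    intro a
    field_simp [hb a]
    ring
  simp only [pseudoOutcomeMean, hterm, mul_add, Finset.sum_add_distrib, Finset.sum_sub_distrib,
    ← Finset.sum_mul, hbsum, one_mul]

theorem condExp_pseudoOutcome_comap_pair {Ω : Type*} [MeasurableSpace Ω] [MeasurableSpace 𝒮]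
    [MeasurableSpace 𝒜] {μ : Measure Ω} [IsFiniteMeasure μ] {S : Ω → 𝒮} {A : Ω → 𝒜}
    (hS : Measurable S) (hA : Measurable A) {Y : Ω → ℝ} (hY : Integrable Y μ)
    (hπ : Measurable fun p : 𝒮 × 𝒜 => π p.1 p.2) (hπnn : ∀ s a, 0 ≤ π s a)
    (hπsum : ∀ s, ∑ a, π s a = 1)
    (hwhat : Measurable fun p : 𝒮 × 𝒜 => what p.1 p.2) {Cw : ℝ} (hCw : ∀ s a, |what s a| ≤ Cw)
    (hqhat : Measurable fun p : 𝒮 × 𝒜 => qhat p.1 p.2) {Cqh : ℝ}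
    (hCqh : ∀ s a, |qhat s a| ≤ Cqh)
    (hYq : μ[Y | MeasurableSpace.comap (fun ω => (S ω, A ω)) inferInstance]
      =ᵐ[μ] fun ω => q (S ω) (A ω)) :
    μ[fun ω => ∑ a, π (S ω) a * qhat (S ω) a + what (S ω) (A ω) * (Y ω - qhat (S ω) (A ω)) |
        MeasurableSpace.comap (fun ω => (S ω, A ω)) inferInstance]
      =ᵐ[μ] fun ω => pseudoOutcomeMean π what q qhat (S ω) (A ω) := by
  have hX : Measurable fun ω => (S ω, A ω) := hS.prodMk hA
  have hQhat : Integrable (fun ω => qhat (S ω) (A ω)) μ :=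
    integrable_of_abs_le (hqhat.comp hX) fun ω => hCqh _ _
  have hQhatX : StronglyMeasurable[MeasurableSpace.comap (fun ω => (S ω, A ω)) inferInstance]
      fun ω => qhat (S ω) (A ω) :=
    (hqhat.comp (comap_measurable fun ω => (S ω, A ω))).stronglyMeasurable
  have hresidual : μ[fun ω => Y ω - qhat (S ω) (A ω) |
      MeasurableSpace.comap (fun ω => (S ω, A ω)) inferInstance]
        =ᵐ[μ] fun ω => q (S ω) (A ω) - qhat (S ω) (A ω) := by
    filter_upwards [condExp_sub hY hQhat _, hYq] with ω hsub hYω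
    refine hsub.trans ?_
    rw [Pi.sub_apply, hYω, condExp_of_stronglyMeasurable hX.comap_le hQhatX hQhat]
  have hc : Measurable fun s => ∑ a, π s a * qhat s a := measurable_sum_mul hπ hqhat
  exact condExp_comap_add_mul_eq (Y := fun ω => Y ω - qhat (S ω) (A ω))
    (h := fun p => q p.1 p.2 - qhat p.1 p.2) hX (hc.comp measurable_fst)
    (integrable_of_abs_le (hc.comp hS) fun ω =>
      abs_sum_mul_le_of_sum_eq_one (fun a _ => hπnn _ a) (hπsum _) fun a _ => hCqh _ a)
    hwhat (fun p => hCw p.1 p.2) (hY.sub hQhat) hresidual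

end BellmanTarget

theorem doubly_robust_bellman_target_error_general
    {Ω 𝒮 𝒜 : Type*} [MeasurableSpace Ω] [MeasurableSpace 𝒮]
    [MeasurableSpace 𝒜] [Fintype 𝒜]
    (μ : Measure Ω) [IsProbabilityMeasure μ]
    (S : Ω → 𝒮) (A : Ω → 𝒜) (R : Ω → ℝ) (S' : Ω → 𝒮)
    (hS : Measurable S) (hA : Measurable A) (hR : Measurable R) (hS' : Measurable S')
    (hRb : ∃ C, ∀ ω, |R ω| ≤ C)
    (γ : ℝ)
    (v : 𝒮 → ℝ) (hv : Measurable v) (hvb : ∃ C, ∀ s, |v s| ≤ C)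
    (b₀ π : 𝒮 → 𝒜 → ℝ)
    (hπ : Measurable fun p : 𝒮 × 𝒜 => π p.1 p.2)
    (hb₀pos : ∀ s a, 0 < b₀ s a) (hπnn : ∀ s a, 0 ≤ π s a)
    (hb₀sum : ∀ s, ∑ a, b₀ s a = 1) (hπsum : ∀ s, ∑ a, π s a = 1)
    -- (i) the conditional law of A given S is b₀
    (hbehavior : ∀ g : 𝒮 → 𝒜 → ℝ, (Measurable fun p : 𝒮 × 𝒜 => g p.1 p.2) →
      (∃ C, ∀ s a, |g s a| ≤ C) →
      μ[fun ω => g (S ω) (A ω) | MeasurableSpace.comap S inferInstance]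
        =ᵐ[μ] fun ω => ∑ a, b₀ (S ω) a * g (S ω) a)
    -- (ii) q is the true Q-function under v
    (q : 𝒮 → 𝒜 → ℝ) (hq : Measurable fun p : 𝒮 × 𝒜 => q p.1 p.2)
    (hqb : ∃ C, ∀ s a, |q s a| ≤ C)
    (hqce : μ[fun ω => R ω + γ * v (S' ω) |
        MeasurableSpace.comap (fun ω => (S ω, A ω)) inferInstance]
      =ᵐ[μ] fun ω => q (S ω) (A ω))
    -- estimated nuisances
    (what qhat : 𝒮 → 𝒜 → ℝ)
    (hwhat : Measurable fun p : 𝒮 × 𝒜 => what p.1 p.2)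
    (hqhat : Measurable fun p : 𝒮 × 𝒜 => qhat p.1 p.2)
    (hwhatb : ∃ C, ∀ s a, |what s a| ≤ C) (hqhatb : ∃ C, ∀ s a, |qhat s a| ≤ C)
    -- the doubly robust pseudo-outcome
    (χ : Ω → ℝ)
    (hχ : ∀ ω, χ ω = (∑ a, π (S ω) a * qhat (S ω) a)
        + what (S ω) (A ω) * (R ω + γ * v (S' ω) - qhat (S ω) (A ω))) :
    (fun ω => (μ[χ | MeasurableSpace.comap S inferInstance]) ω
        - ∑ a, π (S ω) a * q (S ω) a)
      =ᵐ[μ] fun ω => ∑ a,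
        b₀ (S ω) a * (π (S ω) a / b₀ (S ω) a - what (S ω) a) * (qhat (S ω) a - q (S ω) a) := by
  obtain ⟨CR, hCR⟩ := hRb
  obtain ⟨Cv, hCv⟩ := hvb
  obtain ⟨Cq, hCq⟩ := hqb
  obtain ⟨Cw, hCw⟩ := hwhatb
  obtain ⟨Cqh, hCqh⟩ := hqhatb
  obtain rfl : χ = _ := funext hχ
  have hY : Integrable (fun ω => R ω + γ * v (S' ω)) μ :=
    (integrable_of_abs_le hR hCR).add
      ((integrable_of_abs_le (hv.comp hS') fun ω => hCv (S' ω)).const_mul γ)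
  have hpair := condExp_pseudoOutcome_comap_pair hS hA hY hπ hπnn hπsum hwhat hCw hqhat hCqh hqce
  have hle : MeasurableSpace.comap S inferInstance
      ≤ MeasurableSpace.comap (fun ω => (S ω, A ω)) inferInstance :=
    Measurable.comap_le (f := S) (measurable_fst.comp (comap_measurable _))
  have htower := (condExp_condExp_of_le hle (hS.prodMk hA).comap_le).symm.trans
    (condExp_congr_ae hpair)
  filter_upwards [htower, hbehavior _ (measurable_pseudoOutcomeMean hπ hwhat hq hqhat)
    ⟨_, abs_pseudoOutcomeMean_le hπnn hπsum hCw hCq hCqh⟩] with ω htowerω hbehaviorω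
  rw [htowerω, hbehaviorω]
  exact sum_mul_pseudoOutcomeMean_sub (fun a => (hb₀pos _ a).ne') (hb₀sum _)

/-- Doubly robust error identity for the fitted Bellman target: conditionally on the
state `S`, the bias of the doubly robust pseudo-outcome `χ` relative to the true
policy-marginalized Bellman target `∑ₐ π(S,a) q(S,a)` equals
`∑ₐ b₀(S,a) (w(S,a) − what(S,a)) (qhat(S,a) − q(S,a))` with `w = π / b₀`. -/
theorem doubly_robust_bellman_target_error
    {Ω 𝒮 𝒜 : Type*} [MeasurableSpace Ω] [MeasurableSpace 𝒮]
    [MeasurableSpace 𝒜] [Fintype 𝒜] [Nonempty 𝒜]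
    (μ : Measure Ω) [IsProbabilityMeasure μ]
    (S : Ω → 𝒮) (A : Ω → 𝒜) (R : Ω → ℝ) (S' : Ω → 𝒮)
    (hS : Measurable S) (hA : Measurable A) (hR : Measurable R) (hS' : Measurable S')
    (hRb : ∃ C, ∀ ω, |R ω| ≤ C)
    (γ : ℝ) (hγ0 : 0 ≤ γ) (hγ1 : γ < 1)
    (v : 𝒮 → ℝ) (hv : Measurable v) (hvb : ∃ C, ∀ s, |v s| ≤ C)
    (b₀ π : 𝒮 → 𝒜 → ℝ)
    (hb₀ : Measurable fun p : 𝒮 × 𝒜 => b₀ p.1 p.2)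
    (hπ : Measurable fun p : 𝒮 × 𝒜 => π p.1 p.2)
    (hb₀pos : ∀ s a, 0 < b₀ s a) (hπnn : ∀ s a, 0 ≤ π s a)
    (hb₀sum : ∀ s, ∑ a, b₀ s a = 1) (hπsum : ∀ s, ∑ a, π s a = 1)
    -- (i) the conditional law of A given S is b₀
    (hbehavior : ∀ g : 𝒮 → 𝒜 → ℝ, (Measurable fun p : 𝒮 × 𝒜 => g p.1 p.2) →
      (∃ C, ∀ s a, |g s a| ≤ C) →
      μ[fun ω => g (S ω) (A ω) | MeasurableSpace.comap S inferInstance]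
        =ᵐ[μ] fun ω => ∑ a, b₀ (S ω) a * g (S ω) a)
    -- (ii) q is the true Q-function under v
    (q : 𝒮 → 𝒜 → ℝ) (hq : Measurable fun p : 𝒮 × 𝒜 => q p.1 p.2)
    (hqb : ∃ C, ∀ s a, |q s a| ≤ C)
    (hqce : μ[fun ω => R ω + γ * v (S' ω) |
        MeasurableSpace.comap (fun ω => (S ω, A ω)) inferInstance]
      =ᵐ[μ] fun ω => q (S ω) (A ω))
    -- estimated nuisances
    (what qhat : 𝒮 → 𝒜 → ℝ)
    (hwhat : Measurable fun p : 𝒮 × 𝒜 => what p.1 p.2)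
    (hqhat : Measurable fun p : 𝒮 × 𝒜 => qhat p.1 p.2)
    (hwhatb : ∃ C, ∀ s a, |what s a| ≤ C) (hqhatb : ∃ C, ∀ s a, |qhat s a| ≤ C)
    -- the doubly robust pseudo-outcome
    (χ : Ω → ℝ)
    (hχ : ∀ ω, χ ω = (∑ a, π (S ω) a * qhat (S ω) a)
        + what (S ω) (A ω) * (R ω + γ * v (S' ω) - qhat (S ω) (A ω))) :
    (fun ω => (μ[χ | MeasurableSpace.comap S inferInstance]) ω
        - ∑ a, π (S ω) a * q (S ω) a)
      =ᵐ[μ] fun ω => ∑ a,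
        b₀ (S ω) a * (π (S ω) a / b₀ (S ω) a - what (S ω) a) * (qhat (S ω) a - q (S ω) a) :=
  doubly_robust_bellman_target_error_general μ S A R S' hS hA hR hS' hRb γ v hv hvb b₀ π hπ hb₀pos
    hπnn hb₀sum hπsum hbehavior q hq hqb hqce what qhat hwhat hqhat hwhatb hqhatb χ hχ
end

section
/- Let S be a measurable space, γ ∈ [0,1), P a Markov kernel on S with associated operator (Pf)(s) := ∫ f(s') P(s, ds'), and r : S → ℝ bounded measurable. Let v₀ : S → ℝ be bounded measurable with v₀ = r + γ·P v₀ pointwise. Let K be a Markov kernel on S, let μ be a probability measure on S stationary for K, and let r̃, h₀, v̂₀, v̂ : S → ℝ be bounded measurable functions such that: (i) v̂₀ = r̃ + γ·K v̂₀ holds μ-almost everywhere (v̂₀ is the fixed point of the coarsened Bellman operator, with K the coarsened transition kernel E_π[f(S') | v̂(S)] and r̃ the coarsened reward E[r | v̂(S)]); and (ii) r̃ + γ·K v₀ = h₀ holds μ-almost everywhere (h₀ is the projection of v₀ onto functions of v̂). Then ‖v̂ − v₀‖_{L²(μ)} ≤ (1/(1−γ))·‖h₀ − v₀‖_{L²(μ)}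 + ‖v̂ − v̂₀‖_{L²(μ)}. -/
/-! With `g := v̂₀ - v₀`, subtracting (ii) from (i) gives `g = (h₀ - v₀) + γ • K g` μ-a.e.
By Jensen's inequality on each `K s` and stationarity of `μ`, the operator `K` is a contraction
of `L²(μ)`, so `‖g‖ ≤ ‖h₀ - v₀‖ + γ ‖g‖`, i.e. `‖g‖ ≤ (1 - γ)⁻¹ ‖h₀ - v₀‖`. The triangle
inequality `‖v̂ - v₀‖ ≤ ‖v̂ - v̂₀‖ + ‖g‖` concludes. -/

open MeasureTheory ProbabilityTheory
open scoped ENNReal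

section
variable {α E : Type*} {m : MeasurableSpace α} [NormedAddCommGroup E] {p : ℝ≥0∞} {μ : Measure α}

lemma memLp_top_of_abs_le {f : α → ℝ} (hf : Measurable f) (hb : ∃ C, ∀ x, |f x| ≤ C) :
    MemLp f ∞ μ :=
  let ⟨C, hC⟩ := hb
  memLp_top_of_bound hf.aestronglyMeasurable C (.of_forall hC)

lemma lpNorm_congr_ae {f g : α → E} (h : f =ᵐ[μ] g) : lpNorm f p μ = lpNorm g p μ := by
  by_cases hf : AEStronglyMeasurable f μ
  · rw [← toReal_eLpNorm hf, ← toReal_eLpNorm (hf.congr h), eLpNorm_congr_ae h]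
  · rw [lpNorm_of_not_aestronglyMeasurable hf,
      lpNorm_of_not_aestronglyMeasurable fun hg => hf (hg.congr h.symm)]

lemma lpNorm_le_one_div_sub_mul_of_ae_eq_add_smul [NormedSpace ℝ E] {f u g : α → E} {γ : ℝ}
    (hγ0 : 0 ≤ γ) (hγ1 : γ < 1) (hp : 1 ≤ p) (hf : MemLp f p μ)
    (hg : g =ᵐ[μ] f + γ • u) (hu : lpNorm u p μ ≤ lpNorm g p μ) :
    lpNorm g p μ ≤ 1 / (1 - γ) * lpNorm f p μ := by
  have hself : lpNorm g p μ ≤ lpNorm f p μ + γ * lpNorm g p μ :=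
    calc lpNorm g p μ = lpNorm (f + γ • u) p μ := lpNorm_congr_ae hg
      _ ≤ lpNorm f p μ + lpNorm (γ • u) p μ := lpNorm_add_le hf hp
      _ = lpNorm f p μ + γ * lpNorm u p μ := by
        rw [lpNorm_const_smul, coe_nnnorm, Real.norm_of_nonneg hγ0]
      _ ≤ lpNorm f p μ + γ * lpNorm g p μ := by gcongr
  rw [one_div_mul_eq_div, le_div_iff₀ (sub_pos.2 hγ1)]
  linarith

lemma sqrt_integral_sq_eq_lpNorm {f : α → ℝ} (hf : AEStronglyMeasurable f μ) :
    √(∫ x, f x ^ 2 ∂μ) = lpNorm f 2 μ := by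
  rw [lpNorm_eq_integral_norm_rpow_toReal two_ne_zero ENNReal.ofNat_ne_top hf]
  simp [Real.sqrt_eq_rpow]

end

section
variable {S E : Type*} [MeasurableSpace S] [NormedAddCommGroup E] [NormedSpace ℝ E]

lemma sub_ae_eq_add_smul_kernel_integral_sub {K : Kernel S S} {μ : Measure S} {γ : ℝ}
    {r u v h : S → ℝ}
    (hu : ∀ᵐ s ∂μ, Integrable u (K s)) (hv : ∀ᵐ s ∂μ, Integrable v (K s))
    (hufix : u =ᵐ[μ] fun s => r s + γ * ∫ s', u s' ∂K s)
    (hh : (fun s => r s + γ * ∫ s', v s' ∂K s) =ᵐ[μ] h) :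
    u - v =ᵐ[μ] (h - v) + γ • fun s => ∫ s', (u - v) s' ∂K s := by
  filter_upwards [hu, hv, hufix, hh] with s hus hvs hus' hhs
  simp only [Pi.sub_apply, Pi.add_apply, Pi.smul_apply, smul_eq_mul, integral_sub hus hvs]
  rw [hus', ← hhs]
  ring

lemma enorm_integral_le_eLpNorm {ν : Measure S} [IsProbabilityMeasure ν] {p : ℝ≥0∞} (hp : 1 ≤ p)
    {g : S → E} (hg : AEStronglyMeasurable g ν) : ‖∫ s, g s ∂ν‖ₑ ≤ eLpNorm g p ν :=
  calc ‖∫ s, g s ∂ν‖ₑ ≤ ∫⁻ s, ‖g s‖ₑ ∂ν := enorm_integral_le_lintegral_enorm g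
    _ = eLpNorm g 1 ν := eLpNorm_one_eq_lintegral_enorm.symm
    _ ≤ eLpNorm g p ν := eLpNorm_le_eLpNorm_of_exponent_le hp hg

variable {K : Kernel S S} [IsMarkovKernel K] {μ : Measure S} {p : ℝ≥0∞} {g : S → E}

lemma eLpNorm_kernel_integral_le (hstat : μ.bind (fun s => K s) = μ) (hp : 1 ≤ p) (hp' : p ≠ ∞)
    (hg : StronglyMeasurable g) :
    eLpNorm (fun s => ∫ s', g s' ∂K s) p μ ≤ eLpNorm g p μ := by
  have hp0 : p ≠ 0 := (zero_lt_one.trans_le hp).ne'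
  have hq : 0 < p.toReal := ENNReal.toReal_pos hp0 hp'
  rw [eLpNorm_eq_eLpNorm' hp0 hp', eLpNorm_eq_eLpNorm' hp0 hp', ← ENNReal.rpow_le_rpow_iff hq,
    ← lintegral_rpow_enorm_eq_rpow_eLpNorm' hq, ← lintegral_rpow_enorm_eq_rpow_eLpNorm' hq]
  calc ∫⁻ s, ‖∫ s', g s' ∂K s‖ₑ ^ p.toReal ∂μ
      ≤ ∫⁻ s, ∫⁻ s', ‖g s'‖ₑ ^ p.toReal ∂K s ∂μ := lintegral_mono fun s => by
        rw [lintegral_rpow_enorm_eq_rpow_eLpNorm' hq, ← eLpNorm_eq_eLpNorm' hp0 hp']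
        gcongr
        exact enorm_integral_le_eLpNorm hp hg.aestronglyMeasurable
    _ = ∫⁻ s, ‖g s‖ₑ ^ p.toReal ∂μ := by
        conv_rhs => rw [← hstat]
        exact (Measure.lintegral_bind K.measurable.aemeasurable
          (hg.enorm.pow_const _).aemeasurable).symm

lemma lpNorm_kernel_integral_le (hstat : μ.bind (fun s => K s) = μ) (hp : 1 ≤ p) (hp' : p ≠ ∞)
    (hg : StronglyMeasurable g) (hgp : MemLp g p μ) :
    lpNorm (fun s => ∫ s', g s' ∂K s) p μ ≤ lpNorm g p μ := by
  rw [← toReal_eLpNorm hg.aestronglyMeasurable,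
    ← toReal_eLpNorm hg.integral_kernel.aestronglyMeasurable]
  exact ENNReal.toReal_mono hgp.eLpNorm_ne_top (eLpNorm_kernel_integral_le hstat hp hp' hg)

end

theorem calibration_refinement_bound_general
    {S : Type*} [MeasurableSpace S]
    (γ : ℝ) (hγ0 : 0 ≤ γ) (hγ1 : γ < 1)
    (v₀ : S → ℝ) (hv₀m : Measurable v₀) (hv₀b : ∃ C, ∀ s, |v₀ s| ≤ C)
    (K : Kernel S S) [IsMarkovKernel K]
    (μ : Measure S) [IsProbabilityMeasure μ]
    (hstat : μ.bind (fun s => K s) = μ)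
    (rtil h₀ vhat₀ vhat : S → ℝ)
    (hh₀m : Measurable h₀) (hh₀b : ∃ C, ∀ s, |h₀ s| ≤ C)
    (hvhat₀m : Measurable vhat₀) (hvhat₀b : ∃ C, ∀ s, |vhat₀ s| ≤ C)
    (hvhatm : Measurable vhat) (hvhatb : ∃ C, ∀ s, |vhat s| ≤ C)
    -- (i) v̂₀ is the fixed point of the coarsened Bellman operator
    (hfix' : vhat₀ =ᵐ[μ] fun s => rtil s + γ * ∫ s', vhat₀ s' ∂(K s))
    -- (ii) h₀ is the projection of v₀: r̃ + γ K v₀ = h₀ μ-a.e.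
    (hproj : (fun s => rtil s + γ * ∫ s', v₀ s' ∂(K s)) =ᵐ[μ] h₀) :
    Real.sqrt (∫ s, (vhat s - v₀ s) ^ 2 ∂μ)
      ≤ (1 / (1 - γ)) * Real.sqrt (∫ s, (h₀ s - v₀ s) ^ 2 ∂μ)
        + Real.sqrt (∫ s, (vhat s - vhat₀ s) ^ 2 ∂μ) := by
  have hv₀ {ν : Measure S} : MemLp v₀ ∞ ν := memLp_top_of_abs_le hv₀m hv₀b
  have hvhat₀ {ν : Measure S} : MemLp vhat₀ ∞ ν := memLp_top_of_abs_le hvhat₀m hvhat₀b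
  have hvhat : MemLp vhat ∞ μ := memLp_top_of_abs_le hvhatm hvhatb
  have hh₀ : MemLp h₀ ∞ μ := memLp_top_of_abs_le hh₀m hh₀b
  have hdecomp : vhat₀ - v₀ =ᵐ[μ] (h₀ - v₀) + γ • fun s => ∫ s', (vhat₀ - v₀) s' ∂K s :=
    sub_ae_eq_add_smul_kernel_integral_sub (.of_forall fun _ => hvhat₀.integrable le_top)
      (.of_forall fun _ => hv₀.integrable le_top) hfix' hproj
  have hcontract : lpNorm (fun s => ∫ s', (vhat₀ - v₀) s' ∂K s) 2 μ ≤ lpNorm (vhat₀ - v₀) 2 μ :=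
    lpNorm_kernel_integral_le hstat one_le_two ENNReal.ofNat_ne_top
      (hvhat₀m.sub hv₀m).stronglyMeasurable ((hvhat₀.sub hv₀).mono_exponent le_top)
  have hrefine : lpNorm (vhat₀ - v₀) 2 μ ≤ 1 / (1 - γ) * lpNorm (h₀ - v₀) 2 μ :=
    lpNorm_le_one_div_sub_mul_of_ae_eq_add_smul hγ0 hγ1 one_le_two
      ((hh₀.sub hv₀).mono_exponent le_top) hdecomp hcontract
  simp only [← Pi.sub_apply]
  rw [sqrt_integral_sq_eq_lpNorm (hvhatm.sub hv₀m).aestronglyMeasurable,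
    sqrt_integral_sq_eq_lpNorm (hh₀m.sub hv₀m).aestronglyMeasurable,
    sqrt_integral_sq_eq_lpNorm (hvhatm.sub hvhat₀m).aestronglyMeasurable]
  calc lpNorm (vhat - v₀) 2 μ = lpNorm ((vhat - vhat₀) + (vhat₀ - v₀)) 2 μ := by
        rw [sub_add_sub_cancel]
    _ ≤ lpNorm (vhat - vhat₀) 2 μ + lpNorm (vhat₀ - v₀) 2 μ :=
        lpNorm_add_le ((hvhat.sub hvhat₀).mono_exponent le_top) one_le_two
    _ ≤ _ := by linarith

/-- Calibration–refinement bound: the `L²(μ)` estimation error of a value predictor `v̂`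
is bounded by `(1-γ)⁻¹` times the refinement (projection) error of the true value `v₀`
plus the calibration error `‖v̂ − v̂₀‖`, where `v̂₀` is the fixed point of the coarsened
Bellman operator with kernel `K` and reward `r̃`, and `μ` is stationary for `K`. -/
theorem calibration_refinement_bound
    {S : Type*} [MeasurableSpace S]
    (γ : ℝ) (hγ0 : 0 ≤ γ) (hγ1 : γ < 1)
    (P : Kernel S S) [IsMarkovKernel P]
    (r : S → ℝ) (hr : Measurable r) (hrb : ∃ C, ∀ s, |r s| ≤ C)
    (v₀ : S → ℝ) (hv₀m : Measurable v₀) (hv₀b : ∃ C, ∀ s, |v₀ s| ≤ C)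
    (hfix : ∀ s, v₀ s = r s + γ * ∫ s', v₀ s' ∂(P s))
    (K : Kernel S S) [IsMarkovKernel K]
    (μ : Measure S) [IsProbabilityMeasure μ]
    (hstat : μ.bind (fun s => K s) = μ)
    (rtil h₀ vhat₀ vhat : S → ℝ)
    (hrtilm : Measurable rtil) (hrtilb : ∃ C, ∀ s, |rtil s| ≤ C)
    (hh₀m : Measurable h₀) (hh₀b : ∃ C, ∀ s, |h₀ s| ≤ C)
    (hvhat₀m : Measurable vhat₀) (hvhat₀b : ∃ C, ∀ s, |vhat₀ s| ≤ C)
    (hvhatm : Measurable vhat) (hvhatb : ∃ C, ∀ s, |vhat s| ≤ C)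
    -- (i) v̂₀ is the fixed point of the coarsened Bellman operator
    (hfix' : vhat₀ =ᵐ[μ] fun s => rtil s + γ * ∫ s', vhat₀ s' ∂(K s))
    -- (ii) h₀ is the projection of v₀: r̃ + γ K v₀ = h₀ μ-a.e.
    (hproj : (fun s => rtil s + γ * ∫ s', v₀ s' ∂(K s)) =ᵐ[μ] h₀) :
    Real.sqrt (∫ s, (vhat s - v₀ s) ^ 2 ∂μ)
      ≤ (1 / (1 - γ)) * Real.sqrt (∫ s, (h₀ s - v₀ s) ^ 2 ∂μ)
        + Real.sqrt (∫ s, (vhat s - vhat₀ s) ^ 2 ∂μ) :=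
  calibration_refinement_bound_general γ hγ0 hγ1 v₀ hv₀m hv₀b K μ hstat rtil h₀ vhat₀ vhat hh₀m hh₀b
    hvhat₀m hvhat₀b hvhatm hvhatb hfix' hproj
end

section
/- Let S be a measurable space, γ ∈ [0,1), P a Markov kernel on S with operator (Pf)(s) := ∫ f(s') P(s, ds'), and r : S → ℝ bounded measurable, and let v₀ : S → ℝ be bounded measurable with v₀ = r + γ·P v₀ pointwise. Let K be a Markov kernel on S and μ a probability measure stationary for K, and let r̃, h₀, u : S → ℝ be bounded measurable such that: (i) u = r̃ + γ·K u holds μ-almost everywhere (u is the fixed point of the projected Bellman operator with coarsened kernel K and coarsened reward r̃); and (ii) r̃ + γ·K v₀ = h₀ holds μ-almost everywhere (h₀ is the projection of v₀). Then ‖u − v₀‖_{L²(μ)} ≤ (1/(1−γ))·‖h₀ − v₀‖_{L²(μ)}. -/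
/-!
Put `f = u - v₀` and `g = h₀ - v₀`. Subtracting the projected Bellman equation for `u` from
the defining equation of `h₀` gives `f = γ • K f + g` μ-a.e. Jensen's inequality in each fibre
`K s`, integrated against the stationary measure `μ`, shows that `K` is a contraction of
`L²(μ)`; hence `‖f‖ ≤ γ ‖f‖ + ‖g‖` by the triangle inequality, and `‖f‖ ≤ (1 - γ)⁻¹ ‖g‖`.
-/

open MeasureTheory ProbabilityTheory

namespace MeasureTheory

variable {α : Type*} {m : MeasurableSpace α} {μ : Measure α}

section LpNorm

variable {E : Type*} [NormedAddCommGroup E] {p : ENNReal}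

theorem lpNorm_congr_ae {f g : α → E} (hfg : f =ᵐ[μ] g) : lpNorm f p μ = lpNorm g p μ := by
  rw [lpNorm, lpNorm, eLpNorm_congr_ae hfg, aestronglyMeasurable_congr hfg]

theorem lpNorm_two_eq_sqrt_integral_sq {f : α → ℝ} (hf : AEStronglyMeasurable f μ) :
    lpNorm f 2 μ = √(∫ x, f x ^ 2 ∂μ) := by
  rw [lpNorm_eq_integral_norm_rpow_toReal two_ne_zero ENNReal.ofNat_ne_top hf,
    Real.sqrt_eq_rpow]
  simp [sq_abs]

theorem lpNorm_le_of_ae_eq_smul_add [NormedSpace ℝ E] (hp : 1 ≤ p) {f g h : α → E} {γ : ℝ}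
    (hγ0 : 0 ≤ γ) (hγ1 : γ < 1) (hg : MemLp g p μ) (hhf : lpNorm h p μ ≤ lpNorm f p μ)
    (hfhg : f =ᵐ[μ] γ • h + g) :
    lpNorm f p μ ≤ 1 / (1 - γ) * lpNorm g p μ := by
  have hfle : lpNorm f p μ ≤ γ * lpNorm f p μ + lpNorm g p μ :=
    calc lpNorm f p μ = lpNorm (γ • h + g) p μ := lpNorm_congr_ae hfhg
      _ ≤ lpNorm (γ • h) p μ + lpNorm g p μ := lpNorm_add_le' hg hp
      _ = γ * lpNorm h p μ + lpNorm g p μ := by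
        rw [lpNorm_const_smul, coe_nnnorm, Real.norm_of_nonneg hγ0]
      _ ≤ γ * lpNorm f p μ + lpNorm g p μ := by gcongr
  rw [one_div_mul_eq_div, le_div_iff₀ (sub_pos.2 hγ1)]
  linarith

end LpNorm

theorem sq_integral_le_integral_sq [IsProbabilityMeasure μ] {f : α → ℝ} (hf : MemLp f 2 μ) :
    (∫ x, f x ∂μ) ^ 2 ≤ ∫ x, f x ^ 2 ∂μ := by
  have := variance_nonneg f μ
  rw [variance_eq_sub hf] at this
  simpa using this

end MeasureTheory

namespace MeasureTheory.Measure

variable {α β E : Type*} {mα : MeasurableSpace α} {mβ : MeasurableSpace β}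
  [NormedAddCommGroup E] [NormedSpace ℝ E] {K : Kernel α β} {μ : Measure α} {f : β → E}

theorem integral_comp (hf : Integrable f (K ∘ₘ μ)) :
    ∫ x, f x ∂(K ∘ₘ μ) = ∫ a, ∫ x, f x ∂K a ∂μ := by
  rw [comp_eq_comp_const_apply] at hf ⊢
  simpa using Kernel.integral_comp hf

theorem integrable_integral_of_integrable_comp (hf : Integrable f (K ∘ₘ μ)) :
    Integrable (fun a => ∫ x, f x ∂K a) μ := by
  rw [comp_eq_comp_const_apply] at hf
  simpa using hf.integral_comp

end MeasureTheory.Measure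

namespace ProbabilityTheory

variable {α : Type*} {mα : MeasurableSpace α} {K : Kernel α α} [IsMarkovKernel K]
  {μ : Measure α} {f : α → ℝ}

theorem integral_sq_integral_kernel_le_of_comp_eq (hμ : K ∘ₘ μ = μ) (hfm : Measurable f)
    (hf : MemLp f 2 μ) :
    ∫ a, (∫ x, f x ∂K a) ^ 2 ∂μ ≤ ∫ x, f x ^ 2 ∂μ := by
  have hf2 : Integrable (fun x => f x ^ 2) (K ∘ₘ μ) := by
    rw [hμ]
    exact hf.integrable_sq
  have hjensen : ∀ᵐ a ∂μ, (∫ x, f x ∂K a) ^ 2 ≤ ∫ x, f x ^ 2 ∂K a := by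
    filter_upwards [Measure.ae_integrable_of_integrable_comp hf2] with a ha
    exact sq_integral_le_integral_sq
      ((memLp_two_iff_integrable_sq hfm.aestronglyMeasurable).2 ha)
  calc ∫ a, (∫ x, f x ∂K a) ^ 2 ∂μ ≤ ∫ a, ∫ x, f x ^ 2 ∂K a ∂μ :=
        integral_mono_of_nonneg (ae_of_all _ fun _ => sq_nonneg _)
          (Measure.integrable_integral_of_integrable_comp hf2) hjensen
    _ = ∫ x, f x ^ 2 ∂(K ∘ₘ μ) := (Measure.integral_comp hf2).symm
    _ = ∫ x, f x ^ 2 ∂μ := by rw [hμ]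

theorem lpNorm_two_integral_kernel_le_of_comp_eq (hμ : K ∘ₘ μ = μ) (hfm : Measurable f)
    (hf : MemLp f 2 μ) :
    lpNorm (fun a => ∫ x, f x ∂K a) 2 μ ≤ lpNorm f 2 μ := by
  rw [lpNorm_two_eq_sqrt_integral_sq hfm.aestronglyMeasurable,
    lpNorm_two_eq_sqrt_integral_sq hfm.stronglyMeasurable.integral_kernel.aestronglyMeasurable]
  exact Real.sqrt_le_sqrt (integral_sq_integral_kernel_le_of_comp_eq hμ hfm hf)

end ProbabilityTheory

theorem projected_fixed_point_approximation_error_general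
    {S : Type*} [MeasurableSpace S]
    (γ : ℝ) (hγ0 : 0 ≤ γ) (hγ1 : γ < 1)
    (v₀ : S → ℝ) (hv₀m : Measurable v₀) (hv₀b : ∃ C, ∀ s, |v₀ s| ≤ C)
    (K : Kernel S S) [IsMarkovKernel K]
    (μ : Measure S) [IsProbabilityMeasure μ]
    (hstat : μ.bind (fun s => K s) = μ)
    (rtil h₀ u : S → ℝ)
    (hh₀m : Measurable h₀) (hh₀b : ∃ C, ∀ s, |h₀ s| ≤ C)
    (hum : Measurable u) (hub : ∃ C, ∀ s, |u s| ≤ C)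
    -- (i) u is the fixed point of the projected Bellman operator
    (hfix' : u =ᵐ[μ] fun s => rtil s + γ * ∫ s', u s' ∂(K s))
    -- (ii) h₀ is the projection of v₀
    (hproj : (fun s => rtil s + γ * ∫ s', v₀ s' ∂(K s)) =ᵐ[μ] h₀) :
    Real.sqrt (∫ s, (u s - v₀ s) ^ 2 ∂μ)
      ≤ (1 / (1 - γ)) * Real.sqrt (∫ s, (h₀ s - v₀ s) ^ 2 ∂μ) := by
  obtain ⟨Cu, hCu⟩ := hub
  obtain ⟨Cv, hCv⟩ := hv₀b
  obtain ⟨Ch, hCh⟩ := hh₀b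
  set f : S → ℝ := fun s => u s - v₀ s
  set g : S → ℝ := fun s => h₀ s - v₀ s
  have hfm : Measurable f := hum.sub hv₀m
  have hf : MemLp f 2 μ := .of_bound hfm.aestronglyMeasurable (Cu + Cv)
    (ae_of_all _ fun s => (abs_sub _ _).trans (add_le_add (hCu s) (hCv s)))
  have hg : MemLp g 2 μ := .of_bound (hh₀m.sub hv₀m).aestronglyMeasurable (Ch + Cv)
    (ae_of_all _ fun s => (abs_sub _ _).trans (add_le_add (hCh s) (hCv s)))
  have hbellman : f =ᵐ[μ] γ • (fun s => ∫ x, f x ∂K s) + g := by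
    filter_upwards [hfix', hproj] with s hu hh₀
    simp only [f, g, Pi.add_apply, Pi.smul_apply, smul_eq_mul]
    rw [integral_sub (.of_bound hum.aestronglyMeasurable Cu (ae_of_all _ hCu))
      (.of_bound hv₀m.aestronglyMeasurable Cv (ae_of_all _ hCv))]
    linear_combination hu + hh₀
  have key := lpNorm_le_of_ae_eq_smul_add one_le_two hγ0 hγ1 hg
    (lpNorm_two_integral_kernel_le_of_comp_eq hstat hfm hf) hbellman
  rwa [lpNorm_two_eq_sqrt_integral_sq hf.1, lpNorm_two_eq_sqrt_integral_sq hg.1] at key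

/-- Approximation-error bound for the projected (coarsened) Bellman fixed point:
if `u` is the fixed point of the projected Bellman operator `u = r̃ + γ K u` (μ-a.e.),
`h₀` is the projection of the true value `v₀` (`r̃ + γ K v₀ = h₀` μ-a.e.), and `μ` is
stationary for the coarsened kernel `K`, then
`‖u − v₀‖_{L²(μ)} ≤ (1-γ)⁻¹ ‖h₀ − v₀‖_{L²(μ)}`. -/
theorem projected_fixed_point_approximation_error
    {S : Type*} [MeasurableSpace S]
    (γ : ℝ) (hγ0 : 0 ≤ γ) (hγ1 : γ < 1)
    (P : Kernel S S) [IsMarkovKernel P]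
    (r : S → ℝ) (hr : Measurable r) (hrb : ∃ C, ∀ s, |r s| ≤ C)
    (v₀ : S → ℝ) (hv₀m : Measurable v₀) (hv₀b : ∃ C, ∀ s, |v₀ s| ≤ C)
    (hfix : ∀ s, v₀ s = r s + γ * ∫ s', v₀ s' ∂(P s))
    (K : Kernel S S) [IsMarkovKernel K]
    (μ : Measure S) [IsProbabilityMeasure μ]
    (hstat : μ.bind (fun s => K s) = μ)
    (rtil h₀ u : S → ℝ)
    (hrtilm : Measurable rtil) (hrtilb : ∃ C, ∀ s, |rtil s| ≤ C)
    (hh₀m : Measurable h₀) (hh₀b : ∃ C, ∀ s, |h₀ s| ≤ C)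
    (hum : Measurable u) (hub : ∃ C, ∀ s, |u s| ≤ C)
    -- (i) u is the fixed point of the projected Bellman operator
    (hfix' : u =ᵐ[μ] fun s => rtil s + γ * ∫ s', u s' ∂(K s))
    -- (ii) h₀ is the projection of v₀
    (hproj : (fun s => rtil s + γ * ∫ s', v₀ s' ∂(K s)) =ᵐ[μ] h₀) :
    Real.sqrt (∫ s, (u s - v₀ s) ^ 2 ∂μ)
      ≤ (1 / (1 - γ)) * Real.sqrt (∫ s, (h₀ s - v₀ s) ^ 2 ∂μ) :=
  projected_fixed_point_approximation_error_general γ hγ0 hγ1 v₀ hv₀m hv₀b K μ hstat rtil h₀ u hh₀m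
    hh₀b hum hub hfix' hproj
end
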